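/- arXiv:1609.00909 — 5 statements merged into one kernel-verified Lean document; each statement's English description precedes it below -/
import Mathlib

section
/- Let U ⊆ ℤ^d be finite and odd. Then for any unit vector s ∈ ℤ^d (i.e., s = ±e_i for a standard basis vector e_i), the directional boundary ∂^s U := {v ∈ U : v + s ∉ U} satisfies |∂^s U| = |Odd ∩ U| − |Even ∩ U| = |∂U| / (2d), where Odd (Even) denotes the set of odd (even) vertices of ℤ^d. -/
/-- The nearest-neighbor lattice graph on `ℤ^d`: two vertices are adjacent
iff they differ by one in exactly one coordinate (equivalently, ℓ¹-distance 1). -/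
def ZGraph (d : ℕ) : SimpleGraph (Fin d → ℤ) where
  Adj u v := ∑ i, (u i - v i).natAbs = 1
  symm := by
    constructor
    intro u v h
    have e : ∀ i, (v i - u i).natAbs = (u i - v i).natAbs := fun i => by
      rw [← Int.natAbs_neg, neg_sub]
    simpa only [e] using h
  loopless := by
    constructor
    intro u h
    simp at h

/-- A vertex is odd if its coordinate sum is odd. -/
def OddVert {d : ℕ} (v : Fin d → ℤ) : Prop := Odd (∑ i, v i)

/-- A vertex is even if its coordinate sum is even. -/
def EvenVert {d : ℕ} (v : Fin d → ℤ) : Prop := Even (∑ i, v i)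

/-- Internal vertex-boundary of `U`. -/
def intBdry (d : ℕ) (U : Set (Fin d → ℤ)) : Set (Fin d → ℤ) :=
  {u ∈ U | ∃ v, (ZGraph d).Adj u v ∧ v ∉ U}

/-- External vertex-boundary of `U`. -/
def extBdry (d : ℕ) (U : Set (Fin d → ℤ)) : Set (Fin d → ℤ) :=
  {v | v ∉ U ∧ ∃ u ∈ U, (ZGraph d).Adj u v}

/-- A set is odd if its internal vertex-boundary consists of odd vertices. -/
def IsOddSet (d : ℕ) (U : Set (Fin d → ℤ)) : Prop := ∀ u ∈ intBdry d U, OddVert u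

/-- A set is even if its internal vertex-boundary consists of even vertices. -/
def IsEvenSet (d : ℕ) (U : Set (Fin d → ℤ)) : Prop := ∀ u ∈ intBdry d U, EvenVert u

/-- The edge-boundary of `U`: edges with exactly one endpoint in `U`. -/
def edgeBdry (d : ℕ) (U : Set (Fin d → ℤ)) : Set (Sym2 (Fin d → ℤ)) :=
  {e | ∃ u v, (ZGraph d).Adj u v ∧ u ∈ U ∧ v ∉ U ∧ e = s(u, v)}

/-- A cutset: a non-empty finite subset of `ℤ^d` which is connected and co-connected. -/
def IsCutset (d : ℕ) (U : Set (Fin d → ℤ)) : Prop :=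
  U.Finite ∧ U.Nonempty ∧ ((ZGraph d).induce U).Connected ∧ ((ZGraph d).induce Uᶜ).Connected

/-- `OCC d n`: the number of odd cutsets in `ℤ^d` containing the origin with `n` boundary edges. -/
noncomputable def OCC (d n : ℕ) : ℕ :=
  {S : Set (Fin d → ℤ) | IsCutset d S ∧ IsOddSet d S ∧ (0 : Fin d → ℤ) ∈ S ∧
    (edgeBdry d S).ncard = n}.ncard

/-- A set is regular if both it and its complement have no isolated vertices. -/
def IsRegularSet (d : ℕ) (U : Set (Fin d → ℤ)) : Prop :=
  (∀ u ∈ U, ∃ v ∈ U, (ZGraph d).Adj u v) ∧ (∀ u ∉ U, ∃ v ∉ U, (ZGraph d).Adj u v)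

/-- The graph `(ℤ^d)^{⊗r}` where two vertices are adjacent iff their lattice distance is ≤ r. -/
def PowGraph (d r : ℕ) : SimpleGraph (Fin d → ℤ) where
  Adj u v := u ≠ v ∧ (ZGraph d).dist u v ≤ r
  symm := by
    constructor
    rintro u v ⟨h1, h2⟩
    exact ⟨h1.symm, by rwa [SimpleGraph.dist_comm]⟩
  loopless := by constructor; rintro u ⟨h, -⟩; exact h rfl

/-- An `r`-cutset: a finite regular set, connected and co-connected in `(ℤ^d)^{⊗r}`. -/
def IsRCutset (d r : ℕ) (U : Set (Fin d → ℤ)) : Prop :=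
  U.Finite ∧ IsRegularSet d U ∧
    ((PowGraph d r).induce U).Connected ∧ ((PowGraph d r).induce Uᶜ).Connected

/-- An approximation: a pair of disjoint subsets of `ℤ^d`, the first odd, the second even. -/
structure Approx (d : ℕ) where
  inn : Set (Fin d → ℤ)
  out : Set (Fin d → ℤ)
  disj : Disjoint inn out
  inn_odd : IsOddSet d inn
  out_even : IsEvenSet d out

/-- The set of unknown vertices of an approximation. -/
def Approx.star {d : ℕ} (A : Approx d) : Set (Fin d → ℤ) := (A.inn ∪ A.out)ᶜ

/-- `A` approximates `S` if `A.inn ⊆ S` and `A.out ⊆ Sᶜ`. -/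
def Approximates {d : ℕ} (A : Approx d) (S : Set (Fin d → ℤ)) : Prop :=
  A.inn ⊆ S ∧ A.out ⊆ Sᶜ

/-- A `t`-approximation: the subgraph induced on the unknown vertices has
maximum degree at most `t` and no isolated vertices. -/
def IsTApprox (d t : ℕ) (A : Approx d) : Prop :=
  (∀ v ∈ A.star, ({u ∈ A.star | (ZGraph d).Adj v u}).ncard ≤ t) ∧
  (∀ v ∈ A.star, ∃ u ∈ A.star, (ZGraph d).Adj v u)

/-- The neighborhood `N(U)` of a set. -/
def nbrSet (d : ℕ) (U : Set (Fin d → ℤ)) : Set (Fin d → ℤ) :=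
  {v | ∃ u ∈ U, (ZGraph d).Adj v u}

/-- `U⁺ = U ∪ N(U)`. -/
def plus (d : ℕ) (U : Set (Fin d → ℤ)) : Set (Fin d → ℤ) := U ∪ nbrSet d U

/-- `W` separates `S` if every boundary edge of `S` has an endpoint in `W`. -/
def Separates (d : ℕ) (W S : Set (Fin d → ℤ)) : Prop :=
  ∀ a b : Fin d → ℤ, s(a, b) ∈ edgeBdry d S → a ∈ W ∨ b ∈ W

/-! Let `t` be a unit vector. An odd vertex `w` of the odd set `U` either lies in `∂^t U`, or
`w + t` is an even vertex of `U`; conversely an even vertex `v` of `U` is not on the boundary of `U`,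
so `v - t` is an odd vertex of `U`. Hence `|∂^t U| = |Odd ∩ U| - |Even ∩ U|` for each of the `2d`
unit vectors `t`. Every edge of `∂U` is `{v, v + t}` for exactly one unit vector `t` and one
`v ∈ ∂^t U`, so `|∂U|` is the sum of these `2d` equal numbers. -/

def unitVectors (d : ℕ) : Set (Fin d → ℤ) := {t | ∑ i, (t i).natAbs = 1}

def unitVec {d : ℕ} (p : Fin d × ℤˣ) : Fin d → ℤ := Pi.single p.1 (p.2 : ℤ)

lemma unitVec_injective (d : ℕ) : Function.Injective (unitVec (d := d)) := by
  rintro ⟨i, ε⟩ ⟨j, η⟩ h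
  have hij : i = j := by
    by_contra hij
    simpa [unitVec, hij] using congrFun h i
  subst hij
  exact Prod.ext rfl (Units.ext (by simpa [unitVec] using congrFun h i))

lemma exists_unitVec_eq {d : ℕ} {t : Fin d → ℤ} (ht : ∑ i, (t i).natAbs = 1) :
    ∃ p, unitVec p = t := by
  obtain ⟨i, hi⟩ : ∃ i, t i ≠ 0 := by
    by_contra! h
    simp [h] at ht
  have hsplit := Finset.add_sum_erase _ (fun j => (t j).natAbs) (Finset.mem_univ i)
  have hti : (t i).natAbs = 1 := by
    have := Int.natAbs_pos.mpr hi
    omega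
  have hzero : ∑ j ∈ Finset.univ.erase i, (t j).natAbs = 0 := by omega
  have hrest : ∀ j ≠ i, t j = 0 := fun j hj =>
    Int.natAbs_eq_zero.mp <| Finset.sum_eq_zero_iff.mp hzero j (by simp [hj])
  refine ⟨(i, (Int.isUnit_iff_natAbs_eq.mpr hti).unit), funext fun j => ?_⟩
  rcases eq_or_ne j i with rfl | hj
  · simp [unitVec]
  · simp [unitVec, hj, hrest j hj]

lemma unitVectors_eq_range (d : ℕ) : unitVectors d = Set.range (unitVec (d := d)) := by
  ext t
  refine ⟨exists_unitVec_eq, ?_⟩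
  rintro ⟨⟨i, ε⟩, rfl⟩
  show ∑ j, ((Pi.single i (ε : ℤ) : Fin d → ℤ) j).natAbs = 1
  rw [Finset.sum_eq_single i (fun j _ hj => by simp [hj]) (by simp)]
  simp

lemma ncard_unitVectors (d : ℕ) : (unitVectors d).ncard = 2 * d := by
  rw [unitVectors_eq_range, Set.ncard_range_of_injective (unitVec_injective d),
    Nat.card_eq_fintype_card, Fintype.card_prod, Fintype.card_fin, Fintype.card_units_int, mul_comm]

lemma finite_unitVectors (d : ℕ) : (unitVectors d).Finite := by
  rw [unitVectors_eq_range]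
  exact Set.finite_range _

lemma odd_sum_of_mem_unitVectors {d : ℕ} {t : Fin d → ℤ} (ht : t ∈ unitVectors d) :
    Odd (∑ i, t i) := by
  obtain ⟨⟨i, ε⟩, rfl⟩ := (unitVectors_eq_range d).subset ht
  simpa [unitVec] using Int.natAbs_odd.mp (by simp)

lemma zGraph_adj_iff {d : ℕ} {u v : Fin d → ℤ} : (ZGraph d).Adj u v ↔ v - u ∈ unitVectors d := by
  show ∑ i, (u i - v i).natAbs = 1 ↔ ∑ i, ((v - u) i).natAbs = 1
  simp only [Pi.sub_apply, ← Int.natAbs_neg (u _ - v _), neg_sub]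

lemma zGraph_adj_add {d : ℕ} (v : Fin d → ℤ) {t : Fin d → ℤ} (ht : t ∈ unitVectors d) :
    (ZGraph d).Adj v (v + t) := by
  rwa [zGraph_adj_iff, add_sub_cancel_left]

lemma evenVert_add_iff {d : ℕ} (v : Fin d → ℤ) {t : Fin d → ℤ} (ht : t ∈ unitVectors d) :
    EvenVert (v + t) ↔ OddVert v := by
  simp only [EvenVert, OddVert, Pi.add_apply, Finset.sum_add_distrib, Int.even_add',
    odd_sum_of_mem_unitVectors ht, iff_true]

/-- The directional boundary `∂^t U`. -/
def dirBdry {d : ℕ} (U : Set (Fin d → ℤ)) (t : Fin d → ℤ) : Set (Fin d → ℤ) :=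
  {v ∈ U | v + t ∉ U}

lemma Set.Finite.dirBdry {d : ℕ} {U : Set (Fin d → ℤ)} (hU : U.Finite) (t : Fin d → ℤ) :
    (dirBdry U t).Finite :=
  hU.subset (Set.sep_subset _ _)

section OddSet

variable {d : ℕ} {U : Set (Fin d → ℤ)}

lemma IsOddSet.mem_of_adj (hU : IsOddSet d U) {v w : Fin d → ℤ} (hv : v ∈ U) (hev : EvenVert v)
    (hadj : (ZGraph d).Adj v w) : w ∈ U := by
  by_contra hw
  exact Int.not_odd_iff_even.mpr hev (hU v ⟨hv, w, hadj, hw⟩)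

lemma IsOddSet.oddVert_of_mem_dirBdry (hU : IsOddSet d U) {t v : Fin d → ℤ}
    (ht : t ∈ unitVectors d) (hv : v ∈ dirBdry U t) : OddVert v :=
  hU v ⟨hv.1, v + t, zGraph_adj_add v ht, hv.2⟩

lemma IsOddSet.ncard_oddVert_eq (hfin : U.Finite) (hU : IsOddSet d U) {t : Fin d → ℤ}
    (ht : t ∈ unitVectors d) :
    {v ∈ U | OddVert v}.ncard = {v ∈ U | EvenVert v}.ncard + (dirBdry U t).ncard := by
  have hsplit : {v ∈ U | OddVert v} = (· - t) '' {v ∈ U | EvenVert v} ∪ dirBdry U t := by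
    ext w
    constructor
    · rintro ⟨hw, hodd⟩
      by_cases hwt : w + t ∈ U
      · exact Or.inl ⟨w + t, ⟨hwt, (evenVert_add_iff w ht).mpr hodd⟩, add_sub_cancel_right w t⟩
      · exact Or.inr ⟨hw, hwt⟩
    · rintro (⟨v, ⟨hv, hev⟩, rfl⟩ | hw)
      · have hadj : (ZGraph d).Adj v (v - t) := (zGraph_adj_iff.mpr (by rwa [sub_sub_cancel])).symm
        refine ⟨hU.mem_of_adj hv hev hadj, ?_⟩
        rwa [← evenVert_add_iff (v - t) ht, sub_add_cancel]
      · exact ⟨hw.1, hU.oddVert_of_mem_dirBdry ht hw⟩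
  have hdisj : Disjoint ((· - t) '' {v ∈ U | EvenVert v}) (dirBdry U t) := by
    rw [Set.disjoint_left]
    rintro _ ⟨v, ⟨hv, -⟩, rfl⟩ ⟨-, hvt⟩
    exact hvt (by rwa [sub_add_cancel])
  rw [hsplit, Set.ncard_union_eq hdisj ((hfin.subset (Set.sep_subset _ _)).image _)
    (hfin.dirBdry t), Set.ncard_image_of_injective _ sub_left_injective]

end OddSet

section EdgeBoundary

variable {d : ℕ} (U : Set (Fin d → ℤ))

lemma edgeBdry_eq_biUnion :
    edgeBdry d U = ⋃ t ∈ unitVectors d, (fun v => s(v, v + t)) '' dirBdry U t := by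
  ext e
  simp only [Set.mem_iUnion, Set.mem_image]
  constructor
  · rintro ⟨u, v, hadj, hu, hv, rfl⟩
    exact ⟨v - u, zGraph_adj_iff.mp hadj, u, ⟨hu, by rwa [add_sub_cancel]⟩, by rw [add_sub_cancel]⟩
  · rintro ⟨t, ht, v, ⟨hv, hvt⟩, rfl⟩
    exact ⟨v, v + t, zGraph_adj_add v ht, hv, hvt, rfl⟩

lemma eq_of_mk_eq_of_mem_dirBdry {t t' v v' : Fin d → ℤ} (hv : v ∈ dirBdry U t)
    (hv' : v' ∈ dirBdry U t') (h : s(v, v + t) = s(v', v' + t')) : v = v' ∧ t = t' := by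
  rcases Sym2.eq_iff.mp h with ⟨rfl, h⟩ | ⟨rfl, -⟩
  · exact ⟨rfl, add_left_cancel h⟩
  · exact absurd hv.1 hv'.2

lemma ncard_edgeBdry (hfin : U.Finite) :
    (edgeBdry d U).ncard = ∑ᶠ t ∈ unitVectors d, (dirBdry U t).ncard := by
  have hdisj : (unitVectors d).PairwiseDisjoint fun t => (fun v => s(v, v + t)) '' dirBdry U t := by
    rintro t - t' - htt'
    rw [Function.onFun, Set.disjoint_left]
    rintro _ ⟨v, hv, rfl⟩ ⟨v', hv', h⟩
    exact htt' (eq_of_mk_eq_of_mem_dirBdry U hv hv' h.symm).2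
  rw [edgeBdry_eq_biUnion, Set.Finite.ncard_biUnion (finite_unitVectors d)
    (fun t _ => (hfin.dirBdry t).image _) hdisj]
  refine finsum_mem_congr rfl fun t _ => Set.InjOn.ncard_image ?_
  intro v hv v' hv' h
  exact (eq_of_mk_eq_of_mem_dirBdry U hv hv' h).1

end EdgeBoundary

/-- For a finite odd set `U ⊆ ℤ^d` and any unit vector `s`, the directional boundary
`∂^s U = {v ∈ U : v + s ∉ U}` satisfies `|∂^s U| = |Odd ∩ U| - |Even ∩ U| = |∂U| / 2d`. -/
theorem odd_set_directional_boundary (d : ℕ) (U : Set (Fin d → ℤ)) (hUfin : U.Finite)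
    (hUodd : IsOddSet d U) (s : Fin d → ℤ) (hs : ∑ i, (s i).natAbs = 1) :
    (({v ∈ U | v + s ∉ U}).ncard : ℤ) =
        ({v ∈ U | OddVert v}).ncard - ({v ∈ U | EvenVert v}).ncard ∧
      2 * d * ({v ∈ U | v + s ∉ U}).ncard = (edgeBdry d U).ncard := by
  have hdir : ∀ t ∈ unitVectors d, ((dirBdry U t).ncard : ℤ) =
      ({v ∈ U | OddVert v}).ncard - ({v ∈ U | EvenVert v}).ncard := fun t ht => by
    have := hUodd.ncard_oddVert_eq hUfin ht
    omega
  have hconst : ∀ t ∈ unitVectors d, (dirBdry U t).ncard = (dirBdry U s).ncard := fun t ht => by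
    have := hdir t ht
    have := hdir s hs
    omega
  refine ⟨hdir s hs, ?_⟩
  rw [ncard_edgeBdry U hUfin, finsum_mem_congr rfl hconst, ← ncard_unitVectors d, ← finsum_one,
    finsum_mem_mul' _ _ (finite_unitVectors d), one_mul]
  rfl
end

section
/- Fix d ≥ 2. For any integers n ≥ 1 and 1 ≤ t < 2d and any t-approximation A, the number of finite regular odd sets S ⊆ ℤ^d with |∂S| = n that are approximated by A is at most 2^{n/(2d−t)}. -/
open Finset

namespace SimpleGraph

variable {α : Type*}

def IsMaximalIndepIn (G : SimpleGraph α) (V I : Finset α) : Prop :=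
  I ⊆ V ∧ G.IsIndepSet (I : Set α) ∧ ∀ x ∈ V, x ∉ I → ∃ y ∈ I, G.Adj x y

variable {G : SimpleGraph α} {V I : Finset α} {x : α}

theorem IsMaximalIndepIn.eq_of_forall_not_adj (h : G.IsMaximalIndepIn V I)
    (hV : ∀ x ∈ V, ∀ y ∈ V, ¬G.Adj x y) : I = V := by
  refine h.1.antisymm fun x hx => ?_
  by_contra hxI
  obtain ⟨y, hy, hxy⟩ := h.2.2 x hx hxI
  exact hV x hx y (h.1 hy) hxy

theorem IsMaximalIndepIn.erase_of_notMem [DecidableEq α] (h : G.IsMaximalIndepIn V I)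
    (hx : x ∉ I) : G.IsMaximalIndepIn (V.erase x) I :=
  ⟨fun _ hy => mem_erase.2 ⟨ne_of_mem_of_not_mem hy hx, h.1 hy⟩, h.2.1,
    fun y hy => h.2.2 y (mem_of_mem_erase hy)⟩

theorem IsMaximalIndepIn.erase_of_mem [DecidableEq α] [DecidableRel G.Adj]
    (h : G.IsMaximalIndepIn V I) (hx : x ∈ I) :
    G.IsMaximalIndepIn ((V.erase x).filter (¬G.Adj x ·)) (I.erase x) := by
  obtain ⟨hIV, hind, hdom⟩ := h
  refine ⟨fun y hy => ?_, hind.mono (coe_subset.2 (erase_subset x I)), fun w hw hwI => ?_⟩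
  · obtain ⟨hyx, hyI⟩ := mem_erase.1 hy
    exact mem_filter.2 ⟨mem_erase.2 ⟨hyx, hIV hyI⟩, hind hx hyI (Ne.symm hyx)⟩
  · obtain ⟨hw, hxw⟩ := mem_filter.1 hw
    obtain ⟨y, hy, hwy⟩ :=
      hdom w (mem_of_mem_erase hw) fun h => hwI (mem_erase.2 ⟨ne_of_mem_erase hw, h⟩)
    refine ⟨y, mem_erase.2 ⟨?_, hy⟩, hwy⟩
    rintro rfl
    exact hxw hwy.symm

open Classical in
/-- Split at a vertex `x` with a neighbour: a maximal independent set either avoids `x` and is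
maximal in `V.erase x`, or contains `x` and, with `x` removed, is maximal in `V` minus the closed
neighbourhood of `x`, which has at most `#V - 2` vertices. -/
theorem sum_two_pow_card_isMaximalIndepIn_le (V : Finset α) :
    ∑ I ∈ V.powerset.filter (G.IsMaximalIndepIn V), 2 ^ #I ≤ 2 ^ #V := by
  induction V using Finset.strongInduction with | H V ih => ?_
  by_cases hE : ∃ x ∈ V, ∃ z ∈ V, G.Adj x z
  swap
  · push Not at hE
    calc _ ≤ ∑ I ∈ {V}, 2 ^ #I := sum_le_sum_of_subset fun I hI =>
          mem_singleton.2 (IsMaximalIndepIn.eq_of_forall_not_adj (mem_filter.1 hI).2 hE)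
      _ = 2 ^ #V := sum_singleton _ _
  obtain ⟨x, hx, z, hz, hxz⟩ := hE
  set M := V.powerset.filter (G.IsMaximalIndepIn V)
  set W := (V.erase x).filter (¬G.Adj x ·)
  have hWV : W ⊂ V.erase x := ssubset_iff_of_subset (filter_subset _ _) |>.2
    ⟨z, mem_erase.2 ⟨hxz.ne.symm, hz⟩, fun h => (mem_filter.1 h).2 hxz⟩
  have hcard : #(V.erase x) + 1 = #V := card_erase_add_one hx
  have hW : #W + 1 ≤ #(V.erase x) := card_lt_card hWV
  have hwith : ∑ I ∈ M.filter (x ∈ ·), 2 ^ #I ≤ 2 * 2 ^ #W := by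
    have hinj : Set.InjOn (·.erase x) (M.filter (x ∈ ·) : Set (Finset α)) := by
      intro I hI J hJ h
      rw [← insert_erase (mem_filter.1 hI).2, ← insert_erase (mem_filter.1 hJ).2]
      exact congrArg _ h
    calc ∑ I ∈ M.filter (x ∈ ·), 2 ^ #I
          = ∑ I ∈ M.filter (x ∈ ·), 2 * 2 ^ #(I.erase x) := sum_congr rfl fun I hI => by
            rw [← card_erase_add_one (mem_filter.1 hI).2, pow_succ']
      _ = ∑ J ∈ (M.filter (x ∈ ·)).image (·.erase x), 2 * 2 ^ #J :=
          (sum_image (f := fun J => 2 * 2 ^ #J) hinj).symm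
      _ ≤ ∑ J ∈ W.powerset.filter (G.IsMaximalIndepIn W), 2 * 2 ^ #J := by
          refine sum_le_sum_of_subset fun J hJ => ?_
          obtain ⟨I, hI, rfl⟩ := mem_image.1 hJ
          have hmax := ((mem_filter.1 (mem_filter.1 hI).1).2).erase_of_mem (mem_filter.1 hI).2
          exact mem_filter.2 ⟨mem_powerset.2 hmax.1, hmax⟩
      _ = 2 * ∑ J ∈ W.powerset.filter (G.IsMaximalIndepIn W), 2 ^ #J := (mul_sum ..).symm
      _ ≤ 2 * 2 ^ #W := Nat.mul_le_mul_left 2 (ih W (hWV.trans_subset (erase_subset x V)))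
  have hwithout : ∑ I ∈ M.filter (x ∉ ·), 2 ^ #I ≤ 2 ^ #(V.erase x) := by
    refine le_trans (sum_le_sum_of_subset fun I hI => ?_) (ih _ (erase_ssubset hx))
    have hmax := ((mem_filter.1 (mem_filter.1 hI).1).2).erase_of_notMem (mem_filter.1 hI).2
    exact mem_filter.2 ⟨mem_powerset.2 hmax.1, hmax⟩
  have h2W : 2 * 2 ^ #W ≤ 2 ^ #(V.erase x) := by
    rw [← pow_succ']
    exact Nat.pow_le_pow_right two_pos hW
  calc ∑ I ∈ M, 2 ^ #I
        = ∑ I ∈ M.filter (x ∈ ·), 2 ^ #I + ∑ I ∈ M.filter (x ∉ ·), 2 ^ #I :=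
          (sum_filter_add_sum_filter_not M _ _).symm
    _ ≤ 2 ^ #(V.erase x) + 2 ^ #(V.erase x) := by omega
    _ = 2 ^ #V := by rw [← hcard, pow_succ]; ring

open Classical in
theorem card_filter_isMaximalIndepIn_le_two_rpow (V : Finset α) (s : ℝ) :
    (#((V.powerset.filter (G.IsMaximalIndepIn V)).filter fun I => (#V : ℝ) - #I ≤ s) : ℝ) ≤
      2 ^ s := by
  set F := (V.powerset.filter (G.IsMaximalIndepIn V)).filter fun I => (#V : ℝ) - #I ≤ s
  have hterm : ∀ I ∈ F, (2 : ℝ) ^ #V ≤ 2 ^ s * 2 ^ #I := fun I hI => by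
    rw [← Real.rpow_natCast, ← Real.rpow_natCast, ← Real.rpow_add two_pos]
    exact Real.rpow_le_rpow_of_exponent_le one_le_two (by linarith [(mem_filter.1 hI).2])
  have hsum : ∑ I ∈ F, (2 : ℝ) ^ #I ≤ 2 ^ #V := by
    have : ∑ I ∈ F, 2 ^ #I ≤ ∑ I ∈ V.powerset.filter (G.IsMaximalIndepIn V), 2 ^ #I :=
      sum_le_sum_of_subset (filter_subset _ _)
    exact_mod_cast this.trans (sum_two_pow_card_isMaximalIndepIn_le V)
  refine le_of_mul_le_mul_right ?_ (pow_pos two_pos #V)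
  calc (#F : ℝ) * 2 ^ #V = ∑ _I ∈ F, (2 : ℝ) ^ #V := by rw [sum_const, nsmul_eq_mul]
    _ ≤ ∑ I ∈ F, 2 ^ s * 2 ^ #I := sum_le_sum hterm
    _ = 2 ^ s * ∑ I ∈ F, (2 : ℝ) ^ #I := (mul_sum ..).symm
    _ ≤ 2 ^ s * 2 ^ #V := by gcongr

end SimpleGraph

theorem sum_natAbs_eq_one_iff {ι : Type*} [Fintype ι] [DecidableEq ι] (w : ι → ℤ) :
    ∑ i, (w i).natAbs = 1 ↔ ∃ i, ∃ ε : ℤˣ, w = Pi.single i (ε : ℤ) := by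
  constructor
  · intro h
    obtain ⟨i, -, hi⟩ : ∃ i ∈ univ, (w i).natAbs ≠ 0 := by
      by_contra! h0
      rw [sum_eq_zero h0] at h
      exact zero_ne_one h
    have hsplit := add_sum_erase univ (fun j => (w j).natAbs) (mem_univ i)
    have hrest : ∀ j ∈ univ.erase i, (w j).natAbs = 0 := sum_eq_zero_iff.1 (by omega)
    have hunit : IsUnit (w i) := Int.isUnit_iff_natAbs_eq.2 (by omega)
    refine ⟨i, hunit.unit, funext fun j => ?_⟩
    rcases eq_or_ne j i with rfl | hji
    · simp
    · simpa [hji] using hrest j (mem_erase.2 ⟨hji, mem_univ j⟩)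
  · rintro ⟨i, ε, rfl⟩
    rw [sum_eq_single i (fun j _ hji => by simp [hji]) (by simp)]
    simp

theorem not_evenVert_iff {d : ℕ} {v : Fin d → ℤ} : ¬EvenVert v ↔ OddVert v :=
  Int.not_even_iff_odd

namespace ZGraph

variable {d : ℕ} {u v : Fin d → ℤ}

theorem adj_iff : (ZGraph d).Adj u v ↔ ∃ i, ∃ ε : ℤˣ, v = u + Pi.single i (ε : ℤ) := by
  change ∑ i, ((u - v) i).natAbs = 1 ↔ _
  rw [sum_natAbs_eq_one_iff]
  refine ⟨fun ⟨i, ε, h⟩ => ⟨i, -ε, ?_⟩, fun ⟨i, ε, h⟩ => ⟨i, -ε, ?_⟩⟩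
  · rw [Units.val_neg, Pi.single_neg, ← h]; abel
  · rw [Units.val_neg, Pi.single_neg, h]; abel

theorem Adj.oddVert_iff (h : (ZGraph d).Adj u v) : OddVert u ↔ EvenVert v := by
  obtain ⟨i, ε, rfl⟩ := adj_iff.1 h
  have hε : ¬Even (ε : ℤ) := by rcases Int.isUnit_iff.1 ε.isUnit with h | h <;> simp [h]
  simp only [OddVert, EvenVert, Pi.add_apply, sum_add_distrib, sum_pi_single', mem_univ,
    if_true, Int.even_add, hε, iff_false, Int.not_even_iff_odd]

theorem Adj.evenVert_iff (h : (ZGraph d).Adj u v) : EvenVert u ↔ OddVert v :=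
  (Adj.oddVert_iff h.symm).symm

theorem neighborSet_eq_range :
    (ZGraph d).neighborSet v =
      Set.range fun p : Fin d × ℤˣ => v + Pi.single p.1 (p.2 : ℤ) := by
  ext u
  simp [adj_iff, eq_comm]

theorem injective_add_single :
    Function.Injective fun p : Fin d × ℤˣ => v + Pi.single p.1 (p.2 : ℤ) := by
  simp only [Function.Injective, Prod.forall, Prod.mk.injEq]
  intro i ε j η h
  have h' : Pi.single i (ε : ℤ) = Pi.single j (η : ℤ) := (add_right_inj v).1 h
  obtain rfl : i = j := by
    by_contra hij
    simpa [hij] using congrFun h' i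
  exact ⟨rfl, Units.val_injective (by simpa using h')⟩

instance : (ZGraph d).LocallyFinite := fun v => by
  rw [neighborSet_eq_range]
  exact Set.fintypeRange _

theorem degree_eq (v : Fin d → ℤ) : (ZGraph d).degree v = 2 * d := by
  rw [← SimpleGraph.card_neighborSet_eq_degree, ← Nat.card_eq_fintype_card, Nat.card_coe_set_eq,
    neighborSet_eq_range, Set.ncard_range_of_injective injective_add_single, Nat.card_prod,
    Nat.card_eq_fintype_card (α := ℤˣ), Fintype.card_units_int, Nat.card_fin, mul_comm]

end ZGraph

section

variable {d t : ℕ} {A : Approx d} {S S' U : Set (Fin d → ℤ)} {x u : Fin d → ℤ}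

theorem Set.Finite.nbrSet (hU : U.Finite) : (nbrSet d U).Finite := by
  refine (hU.biUnion fun u _ => ((ZGraph d).neighborSet u).toFinite).subset ?_
  rintro v ⟨u, hu, hvu⟩
  exact Set.mem_biUnion hu hvu.symm

theorem Set.Finite.edgeBdry (hS : S.Finite) : (edgeBdry d S).Finite := by
  refine ((hS.prod hS.nbrSet).image fun p => s(p.1, p.2)).subset ?_
  rintro _ ⟨a, b, hab, ha, -, rfl⟩
  exact ⟨(a, b), ⟨ha, a, ha, hab.symm⟩, rfl⟩

theorem mem_edgeBdry_of_adj (h : (ZGraph d).Adj x u) (hxu : ¬(x ∈ S ↔ u ∈ S)) :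
    s(x, u) ∈ edgeBdry d S := by
  by_cases hx : x ∈ S
  · exact ⟨x, u, h, hx, fun hu => hxu (iff_of_true hx hu), rfl⟩
  · exact ⟨u, x, h.symm, by tauto, hx, Sym2.eq_swap⟩

theorem IsOddSet.mem_of_adj_s6 (hS : IsOddSet d S) (hx : x ∈ S) (he : EvenVert x)
    (h : (ZGraph d).Adj x u) : u ∈ S := by
  by_contra hu
  exact not_evenVert_iff.2 (hS x ⟨hx, u, h, hu⟩) he

theorem IsRegularSet.exists_adj_mem_iff (hS : IsRegularSet d S) (x : Fin d → ℤ) :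
    ∃ u, (ZGraph d).Adj x u ∧ (u ∈ S ↔ x ∈ S) := by
  by_cases hx : x ∈ S
  · obtain ⟨u, hu, h⟩ := hS.1 x hx
    exact ⟨u, h, iff_of_true hu hx⟩
  · obtain ⟨u, hu, h⟩ := hS.2 x hx
    exact ⟨u, h, iff_of_false hu hx⟩

/-- Known neighbours of an unknown vertex `x` lie in `A.inn` if `x` is even and in `A.out` if
`x` is odd, since `A.inn` is odd and `A.out` is even. -/
theorem Approximates.mem_iff_evenVert_of_adj (hAS : Approximates A S) (hx : x ∈ A.star)
    (hu : u ∉ A.star) (h : (ZGraph d).Adj x u) : u ∈ S ↔ EvenVert x := by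
  obtain hu | hu : u ∈ A.inn ∪ A.out := not_not.1 hu
  · have hodd : OddVert u := A.inn_odd u ⟨hu, x, h.symm, fun hx' => hx (Or.inl hx')⟩
    exact iff_of_true (hAS.1 hu) ((ZGraph.Adj.evenVert_iff h).2 hodd)
  · have heven : EvenVert u := A.out_even u ⟨hu, x, h.symm, fun hx' => hx (Or.inr hx')⟩
    exact iff_of_false (hAS.2 hu) (not_evenVert_iff.2 ((ZGraph.Adj.oddVert_iff h).2 heven))

theorem Approximates.eq_of_forall_mem_star (hS : Approximates A S) (hS' : Approximates A S')
    (h : ∀ x ∈ A.star, x ∈ S ↔ x ∈ S') : S = S' := by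
  ext x
  by_cases hx : x ∈ A.star
  · exact h x hx
  obtain hx | hx : x ∈ A.inn ∪ A.out := not_not.1 hx
  · exact iff_of_true (hS.1 hx) (hS'.1 hx)
  · exact iff_of_false (hS.2 hx) (hS'.2 hx)

open Classical in
theorem IsTApprox.le_card_filter_notMem_star (hA : IsTApprox d t A) (hx : x ∈ A.star) :
    2 * d - t ≤ #(((ZGraph d).neighborFinset x).filter (· ∉ A.star)) := by
  have hstar : #(((ZGraph d).neighborFinset x).filter (· ∈ A.star)) ≤ t := by
    refine le_of_eq_of_le ?_ (hA.1 x hx)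
    rw [← Set.ncard_coe_finset]
    congr 1
    ext u
    simp [and_comm]
  have := card_filter_add_card_filter_not (s := (ZGraph d).neighborFinset x) (· ∈ A.star)
  rw [SimpleGraph.card_neighborFinset_eq_degree, ZGraph.degree_eq] at this
  omega

theorem IsTApprox.exists_adj_notMem_star (hA : IsTApprox d t A) (ht : t < 2 * d)
    (hx : x ∈ A.star) : ∃ u, (ZGraph d).Adj x u ∧ u ∉ A.star := by
  classical
  obtain ⟨u, hu⟩ := card_pos.1 (lt_of_lt_of_le (by omega) (hA.le_card_filter_notMem_star hx))
  rw [mem_filter, SimpleGraph.mem_neighborFinset] at hu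
  exact ⟨u, hu⟩

/-- An even unknown vertex has a neighbour in `A.inn ⊆ S`, and an odd one has an even unknown
neighbour. -/
theorem IsTApprox.finite_star (hA : IsTApprox d t A) (ht : t < 2 * d) (hS : S.Finite)
    (hAS : Approximates A S) : A.star.Finite := by
  have heven : ∀ x ∈ A.star, EvenVert x → x ∈ nbrSet d S := fun x hx he => by
    obtain ⟨u, hxu, hu⟩ := hA.exists_adj_notMem_star ht hx
    exact ⟨u, (hAS.mem_iff_evenVert_of_adj hx hu hxu).2 he, hxu⟩
  refine (hS.nbrSet.union hS.nbrSet.nbrSet).subset fun x hx => ?_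
  by_cases he : EvenVert x
  · exact Or.inl (heven x hx he)
  · obtain ⟨u, hu, hxu⟩ := hA.2 x hx
    exact Or.inr ⟨u, heven u hu ((ZGraph.Adj.oddVert_iff hxu).1 (not_evenVert_iff.1 he)),
      hxu⟩

open Classical in
noncomputable def evenAligned (V : Finset (Fin d → ℤ)) (S : Set (Fin d → ℤ)) :
    Finset (Fin d → ℤ) :=
  V.filter fun x => x ∈ S ↔ EvenVert x

theorem mem_evenAligned {V : Finset (Fin d → ℤ)} :
    x ∈ evenAligned V S ↔ x ∈ V ∧ (x ∈ S ↔ EvenVert x) := by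
  classical
  simp [evenAligned]

theorem evenAligned_subset (V : Finset (Fin d → ℤ)) (S : Set (Fin d → ℤ)) :
    evenAligned V S ⊆ V :=
  fun _ hx => (mem_evenAligned.1 hx).1

theorem evenAligned_injOn {V : Finset (Fin d → ℤ)} (hV : ∀ x ∈ A.star, x ∈ V) :
    Set.InjOn (evenAligned V) {S | Approximates A S} := by
  intro S hS S' hS' h
  refine hS.eq_of_forall_mem_star hS' fun x hx => ?_
  have := congrArg (x ∈ ·) h
  simp only [mem_evenAligned, hV x hx, true_and, eq_iff_iff] at this
  tauto

theorem isMaximalIndepIn_evenAligned (hreg : IsRegularSet d S) (hodd : IsOddSet d S)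
    (hAS : Approximates A S) {V : Finset (Fin d → ℤ)} (hV : ∀ x, x ∈ V ↔ x ∈ A.star) :
    (ZGraph d).IsMaximalIndepIn V (evenAligned V S) := by
  refine ⟨evenAligned_subset V S, fun a ha b hb _ hab => ?_, fun x hx hxI => ?_⟩
  · have ha := (mem_evenAligned.1 ha).2
    have hb := (mem_evenAligned.1 hb).2
    have hpar := ZGraph.Adj.evenVert_iff hab
    by_cases he : EvenVert a
    · have := hodd.mem_of_adj_s6 (ha.2 he) he hab
      exact not_evenVert_iff.2 (hpar.1 he) (hb.1 this)
    · have hbe := (ZGraph.Adj.evenVert_iff hab.symm).2 (not_evenVert_iff.1 he)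
      have := hodd.mem_of_adj_s6 (hb.2 hbe) hbe hab.symm
      exact he (ha.1 this)
  · have hx' : ¬(x ∈ S ↔ EvenVert x) := fun h => hxI (mem_evenAligned.2 ⟨hx, h⟩)
    obtain ⟨u, hxu, hu⟩ := hreg.exists_adj_mem_iff x
    have hustar : u ∈ A.star := by
      by_contra hu'
      exact hx' (hu.symm.trans (hAS.mem_iff_evenVert_of_adj ((hV x).1 hx) hu' hxu))
    refine ⟨u, mem_evenAligned.2 ⟨(hV u).2 hustar, ?_⟩, hxu⟩
    rw [hu, ZGraph.Adj.evenVert_iff hxu.symm, ← not_evenVert_iff]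
    tauto

/-- Each unknown vertex where `S` is not even-aligned has at least `2d - t` known neighbours, every
edge to them is a boundary edge of `S`, and distinct unknown vertices give distinct edges. -/
theorem IsTApprox.mul_card_sdiff_evenAligned_le (hA : IsTApprox d t A) (hAS : Approximates A S)
    (hS : S.Finite) {V : Finset (Fin d → ℤ)} (hV : ∀ x ∈ V, x ∈ A.star) :
    (2 * d - t) * #(V \ evenAligned V S) ≤ (edgeBdry d S).ncard := by
  classical
  set T := V \ evenAligned V S
  have hT : ∀ x ∈ T, x ∈ A.star ∧ ¬(x ∈ S ↔ EvenVert x) := fun x hx => by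
    obtain ⟨hxV, hxI⟩ := mem_sdiff.1 hx
    exact ⟨hV x hxV, fun h => hxI (mem_evenAligned.2 ⟨hxV, h⟩)⟩
  set E : (Fin d → ℤ) → Finset (Sym2 (Fin d → ℤ)) := fun x =>
    (((ZGraph d).neighborFinset x).filter (· ∉ A.star)).image (s(x, ·))
  have hE : ∀ x ∈ T, 2 * d - t ≤ #(E x) := fun x hx => by
    rw [card_image_of_injective _ fun _ _ => Sym2.congr_right.1]
    exact hA.le_card_filter_notMem_star (hT x hx).1
  have hEsub : T.biUnion E ⊆ hS.edgeBdry.toFinset := by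
    simp only [biUnion_subset, E, image_subset_iff, mem_filter, SimpleGraph.mem_neighborFinset,
      Set.Finite.mem_toFinset]
    intro x hx u ⟨hxu, hu⟩
    refine mem_edgeBdry_of_adj hxu fun h => (hT x hx).2 ?_
    rw [h, hAS.mem_iff_evenVert_of_adj (hT x hx).1 hu hxu]
  have hdisj : (T : Set (Fin d → ℤ)).PairwiseDisjoint E := by
    intro x hx y hy hxy
    simp only [Function.onFun, E, disjoint_left, mem_image, mem_filter]
    rintro _ ⟨u, ⟨-, hu⟩, rfl⟩ ⟨v, ⟨-, hv⟩, he⟩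
    rcases Sym2.eq_iff.1 he with ⟨rfl, -⟩ | ⟨rfl, -⟩
    · exact hxy rfl
    · exact hu (hT _ hy).1
  calc (2 * d - t) * #T = ∑ _x ∈ T, (2 * d - t) := by rw [sum_const, smul_eq_mul, mul_comm]
    _ ≤ ∑ x ∈ T, #(E x) := sum_le_sum hE
    _ = #(T.biUnion E) := (card_biUnion hdisj).symm
    _ ≤ (edgeBdry d S).ncard := by
      rw [Set.ncard_eq_toFinset_card _ hS.edgeBdry]
      exact card_le_card hEsub

theorem IsTApprox.card_sub_card_evenAligned_le (hA : IsTApprox d t A) (ht : t < 2 * d)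
    (hAS : Approximates A S) (hS : S.Finite) {V : Finset (Fin d → ℤ)}
    (hV : ∀ x ∈ V, x ∈ A.star) :
    (#V : ℝ) - #(evenAligned V S) ≤ (edgeBdry d S).ncard / (2 * d - t) := by
  have hcharge := hA.mul_card_sdiff_evenAligned_le hAS hS hV
  rw [card_sdiff_of_subset (evenAligned_subset V S)] at hcharge
  have hcast := (Nat.cast_le (α := ℝ)).2 hcharge
  push_cast [Nat.cast_sub ht.le, Nat.cast_sub (card_le_card (evenAligned_subset V S))] at hcast
  have ht' : (t : ℝ) < 2 * d := by exact_mod_cast ht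
  rw [le_div_iff₀ (by linarith)]
  linarith

end

theorem count_regular_odd_sets_with_approx_general (d : ℕ) (n t : ℕ)
    (ht2 : t < 2 * d) (A : Approx d) (hA : IsTApprox d t A) :
    (({S : Set (Fin d → ℤ) | S.Finite ∧ IsRegularSet d S ∧ IsOddSet d S ∧
        Approximates A S ∧ (edgeBdry d S).ncard = n}).ncard : ℝ) ≤
      (2 : ℝ) ^ ((n : ℝ) / (2 * d - t)) := by
  classical
  set 𝒮 := {S : Set (Fin d → ℤ) | S.Finite ∧ IsRegularSet d S ∧ IsOddSet d S ∧
    Approximates A S ∧ (edgeBdry d S).ncard = n}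
  obtain h𝒮 | ⟨S₀, hS₀, -, -, hAS₀, -⟩ := 𝒮.eq_empty_or_nonempty
  · rw [h𝒮, Set.ncard_empty, Nat.cast_zero]
    positivity
  set V := (hA.finite_star ht2 hS₀ hAS₀).toFinset
  have hV : ∀ x, x ∈ V ↔ x ∈ A.star := fun x => Set.Finite.mem_toFinset _
  set F := (V.powerset.filter ((ZGraph d).IsMaximalIndepIn V)).filter
    fun I => (#V : ℝ) - #I ≤ n / (2 * d - t)
  have hmaps : ∀ S ∈ 𝒮, evenAligned V S ∈ F := by
    rintro S ⟨hS, hreg, hodd, hAS, hn⟩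
    have hmax := isMaximalIndepIn_evenAligned hreg hodd hAS hV
    refine mem_filter.2 ⟨mem_filter.2 ⟨mem_powerset.2 hmax.1, hmax⟩, ?_⟩
    rw [← hn]
    exact hA.card_sub_card_evenAligned_le ht2 hAS hS fun x => (hV x).1
  calc (𝒮.ncard : ℝ) ≤ #F := by
        exact_mod_cast (Set.ncard_le_ncard_of_injOn _ hmaps
          ((evenAligned_injOn fun x => (hV x).2).mono fun S hS => hS.2.2.2.1)
          F.finite_toSet).trans_eq (Set.ncard_coe_finset F)
    _ ≤ 2 ^ ((n : ℝ) / (2 * d - t)) :=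
      SimpleGraph.card_filter_isMaximalIndepIn_le_two_rpow V _

/-- The number of finite regular odd sets with `n` boundary edges approximated by a given
`t`-approximation is at most `2^{n/(2d-t)}`. -/
theorem count_regular_odd_sets_with_approx (d : ℕ) (hd : 2 ≤ d) (n t : ℕ)
    (hn : 1 ≤ n) (ht1 : 1 ≤ t) (ht2 : t < 2 * d) (A : Approx d) (hA : IsTApprox d t A) :
    (({S : Set (Fin d → ℤ) | S.Finite ∧ IsRegularSet d S ∧ IsOddSet d S ∧
        Approximates A S ∧ (edgeBdry d S).ncard = n}).ncard : ℝ) ≤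
      (2 : ℝ) ^ ((n : ℝ) / (2 * d - t)) :=
  count_regular_odd_sets_with_approx_general d n t ht2 A hA
end

section
/- Fix d ≥ 2, an integer 1 ≤ t < 2d and a t-approximation A. For a finite regular odd set S approximated by A, define D(S) := (Odd ∩ A* ∩ S) ∪ (Even ∩ A* ∩ S^c). Then the map S ↦ D(S) is injective on the collection of finite regular odd sets approximated by A, and for every such S, D(S) is a minimal vertex-cover of the subgraph of ℤ^d induced by A*. -/
/-- `D(S) = (Odd ∩ A* ∩ S) ∪ (Even ∩ A* ∩ Sᶜ)`. -/
def Dmap (d : ℕ) (A : Approx d) (S : Set (Fin d → ℤ)) : Set (Fin d → ℤ) :=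
  {v ∈ A.star ∩ S | OddVert v} ∪ {v ∈ A.star ∩ Sᶜ | EvenVert v}

/-- `D` is a minimal vertex-cover of the subgraph of `ℤ^d` induced by `V`. -/
def IsMinVC (d : ℕ) (V D : Set (Fin d → ℤ)) : Prop :=
  D ⊆ V ∧ (∀ u ∈ V, ∀ v ∈ V, (ZGraph d).Adj u v → u ∈ D ∨ v ∈ D) ∧
  ∀ D' ⊆ D, (∀ u ∈ V, ∀ v ∈ V, (ZGraph d).Adj u v → u ∈ D' ∨ v ∈ D') → D' = D

/-!
Inside `A*` a vertex lies in `S` exactly when its membership in `D(S)` agrees with its parity, and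
outside `A*` membership in `S` is dictated by `A`; this gives injectivity. Adjacent vertices have
opposite parity, and since `S` is odd an edge leaving `S` starts at an odd vertex, so one endpoint of
every edge of `A*` lies in `D(S)`. For minimality, regularity gives every `v ∈ D(S)` a neighbour `w`
on the same side of `S`. Then `w ∉ D(S)` since its parity differs from that of `v`, and `w ∈ A*`
since otherwise `w` would be a boundary vertex of `A•` or `A∘` of the wrong parity.
-/

lemma ZGraph.oddVert_iff_not_oddVert {d : ℕ} {u v : Fin d → ℤ} (h : (ZGraph d).Adj u v) :
    OddVert u ↔ ¬ OddVert v := by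
  have hsum : ∑ i, |u i - v i| = 1 := by
    have : ((∑ i, (u i - v i).natAbs : ℕ) : ℤ) = 1 := by exact_mod_cast h
    simpa only [Nat.cast_sum, Int.natCast_natAbs] using this
  have heven : Even (∑ i, |u i - v i| - ∑ i, (u i - v i)) := by
    rw [← Finset.sum_sub_distrib]
    exact Finset.even_sum _ fun i _ => Int.even_sub.mpr even_abs
  rw [hsum, Finset.sum_sub_distrib, Int.even_iff] at heven
  simp only [OddVert, Int.odd_iff]
  omega

lemma IsOddSet.oddVert_of_adj {d : ℕ} {U : Set (Fin d → ℤ)} (hU : IsOddSet d U)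
    {u v : Fin d → ℤ} (hu : u ∈ U) (hv : v ∉ U) (h : (ZGraph d).Adj u v) : OddVert u :=
  hU u ⟨hu, v, h, hv⟩

lemma IsEvenSet.not_oddVert_of_adj {d : ℕ} {U : Set (Fin d → ℤ)} (hU : IsEvenSet d U)
    {u v : Fin d → ℤ} (hu : u ∈ U) (hv : v ∉ U) (h : (ZGraph d).Adj u v) : ¬ OddVert u :=
  Int.not_odd_iff_even.mpr (hU u ⟨hu, v, h, hv⟩)

lemma IsRegularSet.exists_adj_mem_iff_s8 {d : ℕ} {U : Set (Fin d → ℤ)} (hU : IsRegularSet d U)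
    (v : Fin d → ℤ) : ∃ w, (ZGraph d).Adj v w ∧ (w ∈ U ↔ v ∈ U) := by
  by_cases hv : v ∈ U
  · obtain ⟨w, hw, h⟩ := hU.1 v hv
    exact ⟨w, h, iff_of_true hw hv⟩
  · obtain ⟨w, hw, h⟩ := hU.2 v hv
    exact ⟨w, h, iff_of_false hw hv⟩

lemma isMinVC_of_forall_exists_adj_notMem {d : ℕ} {V D : Set (Fin d → ℤ)} (hDV : D ⊆ V)
    (hcover : ∀ u ∈ V, ∀ v ∈ V, (ZGraph d).Adj u v → u ∈ D ∨ v ∈ D)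
    (hsharp : ∀ v ∈ D, ∃ w ∈ V, (ZGraph d).Adj v w ∧ w ∉ D) : IsMinVC d V D := by
  refine ⟨hDV, hcover, fun D' hD' hcover' => hD'.antisymm fun v hv => ?_⟩
  obtain ⟨w, hwV, hvw, hwD⟩ := hsharp v hv
  exact (hcover' v (hDV hv) w hwV hvw).resolve_right fun hw => hwD (hD' hw)

section Dmap

variable {d : ℕ} {A : Approx d} {S : Set (Fin d → ℤ)}

lemma mem_Dmap_iff {v : Fin d → ℤ} : v ∈ Dmap d A S ↔ v ∈ A.star ∧ (v ∈ S ↔ OddVert v) := by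
  have := Int.not_odd_iff_even (n := ∑ i, v i)
  simp only [Dmap, EvenVert, OddVert, Set.mem_union, Set.mem_ofPred_eq, Set.mem_inter_iff,
    Set.mem_compl_iff] at this ⊢
  tauto

lemma Dmap_subset_star : Dmap d A S ⊆ A.star := fun _ hv => (mem_Dmap_iff.mp hv).1

lemma mem_iff_of_approximates (hS : Approximates A S) {v : Fin d → ℤ} :
    v ∈ S ↔ v ∈ A.inn ∨ v ∈ A.star ∧ (v ∈ Dmap d A S ↔ OddVert v) := by
  rw [mem_Dmap_iff]
  have hinn := @hS.1 v
  have hout := @hS.2 v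
  simp only [Approx.star, Set.mem_compl_iff, Set.mem_union] at hout ⊢
  tauto

lemma eq_of_Dmap_eq {S₁ S₂ : Set (Fin d → ℤ)} (h₁ : Approximates A S₁)
    (h₂ : Approximates A S₂) (hD : Dmap d A S₁ = Dmap d A S₂) : S₁ = S₂ := by
  ext v
  rw [mem_iff_of_approximates h₁, mem_iff_of_approximates h₂, hD]

lemma mem_or_mem_Dmap_of_adj (hS : IsOddSet d S) {u v : Fin d → ℤ} (hu : u ∈ A.star)
    (hv : v ∈ A.star) (h : (ZGraph d).Adj u v) : u ∈ Dmap d A S ∨ v ∈ Dmap d A S := by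
  have hpar := ZGraph.oddVert_iff_not_oddVert h
  have huv := fun hu hv => hS.oddVert_of_adj hu hv h
  have hvu := fun hv hu => hS.oddVert_of_adj hv hu h.symm
  simp only [mem_Dmap_iff, hu, hv, true_and]
  tauto

lemma mem_star_and_notMem_Dmap_of_adj (hS : Approximates A S) {v w : Fin d → ℤ}
    (hv : v ∈ Dmap d A S) (h : (ZGraph d).Adj v w) (hw : w ∈ S ↔ v ∈ S) :
    w ∈ A.star ∧ w ∉ Dmap d A S := by
  obtain ⟨hvA, hvS⟩ := mem_Dmap_iff.mp hv
  have hpar := ZGraph.oddVert_iff_not_oddVert h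
  simp only [Approx.star, Set.mem_compl_iff, Set.mem_union, not_or] at hvA
  have hinn : w ∉ A.inn := fun hwA => by
    have := A.inn_odd.oddVert_of_adj hwA hvA.1 h.symm
    have := hS.1 hwA
    tauto
  have hout : w ∉ A.out := fun hwA => by
    have := A.out_even.not_oddVert_of_adj hwA hvA.2 h.symm
    have := hS.2 hwA
    tauto
  refine ⟨by simp [Approx.star, hinn, hout], fun hwD => ?_⟩
  have := (mem_Dmap_iff.mp hwD).2
  tauto

end Dmap

theorem Dmap_injective_and_minimal_cover_general (d : ℕ) (A : Approx d) :
    (∀ S₁ S₂ : Set (Fin d → ℤ),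
      S₁.Finite ∧ IsRegularSet d S₁ ∧ IsOddSet d S₁ ∧ Approximates A S₁ →
      S₂.Finite ∧ IsRegularSet d S₂ ∧ IsOddSet d S₂ ∧ Approximates A S₂ →
      Dmap d A S₁ = Dmap d A S₂ → S₁ = S₂) ∧
    ∀ S : Set (Fin d → ℤ), S.Finite → IsRegularSet d S → IsOddSet d S →
      Approximates A S → IsMinVC d A.star (Dmap d A S) := by
  refine ⟨fun S₁ S₂ h₁ h₂ hD => eq_of_Dmap_eq h₁.2.2.2 h₂.2.2.2 hD, ?_⟩
  intro S _ hreg hodd happrox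
  refine isMinVC_of_forall_exists_adj_notMem Dmap_subset_star
    (fun u hu v hv h => mem_or_mem_Dmap_of_adj hodd hu hv h) fun v hv => ?_
  obtain ⟨w, h, hw⟩ := hreg.exists_adj_mem_iff_s8 v
  obtain ⟨hwA, hwD⟩ := mem_star_and_notMem_Dmap_of_adj happrox hv h hw
  exact ⟨w, hwA, h, hwD⟩

/-- The map `S ↦ D(S)` is injective on finite regular odd sets approximated by a
`t`-approximation `A`, and `D(S)` is always a minimal vertex-cover of `A*`. -/
theorem Dmap_injective_and_minimal_cover (d t : ℕ) (hd : 2 ≤ d) (ht1 : 1 ≤ t)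
    (ht2 : t < 2 * d) (A : Approx d) (hA : IsTApprox d t A) :
    (∀ S₁ S₂ : Set (Fin d → ℤ),
      S₁.Finite ∧ IsRegularSet d S₁ ∧ IsOddSet d S₁ ∧ Approximates A S₁ →
      S₂.Finite ∧ IsRegularSet d S₂ ∧ IsOddSet d S₂ ∧ Approximates A S₂ →
      Dmap d A S₁ = Dmap d A S₂ → S₁ = S₂) ∧
    ∀ S : Set (Fin d → ℤ), S.Finite → IsRegularSet d S → IsOddSet d S →
      Approximates A S → IsMinVC d A.star (Dmap d A S) :=
  Dmap_injective_and_minimal_cover_general d A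
end

section
/- Let G be a finite graph and let (p_v)_{v ∈ V(G)} be non-negative real numbers satisfying p_u + p_v ≤ 1 for every edge {u,v} of G. Then the sum over all minimal vertex-covers U of G of the product ∏_{u ∈ U} p_u is at most 1. -/
/-!
Induction on the graph. Fix an edge `vw`. A minimal vertex-cover `U` either contains `v`, or
misses `v` and then contains the whole neighbourhood `N(v)`. For `S = {v}` resp. `S = N(v)`, the
map `U ↦ U \ S` sends these covers injectively to minimal vertex-covers of the smaller graph
obtained by deleting every edge incident to `S`. By induction the two parts contribute at most
`p v` and `∏_{N(v)} p ≤ p w`, and `p v + p w ≤ 1`.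
-/

namespace SimpleGraph

variable {V : Type*}

def deleteIncidenceSets (G : SimpleGraph V) (s : Set V) : SimpleGraph V :=
  G.deleteEdges {e | ∃ x ∈ s, x ∈ e}

variable {G : SimpleGraph V}

@[simp]
lemma deleteIncidenceSets_adj {s : Set V} {a b : V} :
    (G.deleteIncidenceSets s).Adj a b ↔ G.Adj a b ∧ a ∉ s ∧ b ∉ s := by
  simp only [deleteIncidenceSets, deleteEdges_adj, Set.mem_ofPred_eq, Sym2.mem_iff]
  grind

lemma deleteIncidenceSets_lt {s : Set V} {a b : V} (hab : G.Adj a b) (ha : a ∈ s) :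
    G.deleteIncidenceSets s < G :=
  (deleteEdges_le _).lt_of_not_ge fun h => (deleteIncidenceSets_adj.1 (h hab)).2.1 ha

lemma IsVertexCover.sdiff_deleteIncidenceSets {U : Set V} (hU : G.IsVertexCover U) (s : Set V) :
    (G.deleteIncidenceSets s).IsVertexCover (U \ s) := by
  intro a b hab
  obtain ⟨hab, ha, hb⟩ := deleteIncidenceSets_adj.1 hab
  exact (hU hab).imp (⟨·, ha⟩) (⟨·, hb⟩)

lemma IsVertexCover.union_of_deleteIncidenceSets {W s : Set V}
    (hW : (G.deleteIncidenceSets s).IsVertexCover W) : G.IsVertexCover (W ∪ s) := by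
  intro a b hab
  by_cases ha : a ∈ s
  · exact .inl (.inr ha)
  by_cases hb : b ∈ s
  · exact .inr (.inr hb)
  exact (hW (deleteIncidenceSets_adj.2 ⟨hab, ha, hb⟩)).imp .inl .inl

lemma IsVertexCover.neighborSet_subset {U : Set V} (hU : G.IsVertexCover U) {v : V} (hv : v ∉ U) :
    G.neighborSet v ⊆ U :=
  fun _ hw => (hU hw).resolve_left hv

lemma minimal_isVertexCover_sdiff [DecidableEq V] {U s : Finset V}
    (hU : Minimal (fun W : Finset V => G.IsVertexCover W) U) (hs : s ⊆ U) :
    Minimal (fun W : Finset V => (G.deleteIncidenceSets s).IsVertexCover W) (U \ s) := by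
  refine minimal_iff.2 ⟨by simpa using hU.prop.sdiff_deleteIncidenceSets s, fun W hW hWU => ?_⟩
  have hWs : W ∪ s = U := hU.eq_of_le (by simpa using hW.union_of_deleteIncidenceSets)
    (Finset.union_subset (hWU.trans Finset.sdiff_subset) hs)
  rw [← hWs, Finset.union_sdiff_right,
    Finset.sdiff_eq_self_of_disjoint (Finset.disjoint_of_subset_left hWU Finset.sdiff_disjoint)]

open scoped Classical in
noncomputable def minimalVertexCovers [Fintype V] (G : SimpleGraph V) : Finset (Finset V) :=
  {U | Minimal (fun W : Finset V => G.IsVertexCover W) U}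

lemma mem_minimalVertexCovers [Fintype V] {U : Finset V} :
    U ∈ G.minimalVertexCovers ↔ Minimal (fun W : Finset V => G.IsVertexCover W) U := by
  simp [minimalVertexCovers]

@[simp]
lemma minimalVertexCovers_bot [Fintype V] : (⊥ : SimpleGraph V).minimalVertexCovers = {∅} := by
  ext U
  simp [mem_minimalVertexCovers]


variable {R : Type*} [CommSemiring R] [PartialOrder R] [IsOrderedRing R]

lemma sum_prod_minimalVertexCovers_superset_le [Fintype V] [DecidableEq V] {p : V → R}
    (hp : ∀ v, 0 ≤ p v) (s : Finset V) :
    ∑ U ∈ G.minimalVertexCovers with s ⊆ U, ∏ u ∈ U, p u ≤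
      (∏ u ∈ s, p u) * ∑ U ∈ (G.deleteIncidenceSets s).minimalVertexCovers, ∏ u ∈ U, p u := by
  have hinj : Set.InjOn (· \ s) ↑(G.minimalVertexCovers.filter (s ⊆ ·)) :=
    fun U₁ hU₁ U₂ hU₂ h => by
      rw [← Finset.sdiff_union_of_subset (Finset.mem_filter.1 hU₁).2,
        ← Finset.sdiff_union_of_subset (Finset.mem_filter.1 hU₂).2]
      exact congrArg (· ∪ s) h
  calc ∑ U ∈ G.minimalVertexCovers with s ⊆ U, ∏ u ∈ U, p u
      = ∑ U ∈ G.minimalVertexCovers with s ⊆ U, (∏ u ∈ s, p u) * ∏ u ∈ U \ s, p u :=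
        Finset.sum_congr rfl fun U hU => by
          rw [mul_comm, Finset.prod_sdiff (Finset.mem_filter.1 hU).2]
    _ = (∏ u ∈ s, p u) *
          ∑ U ∈ (G.minimalVertexCovers.filter (s ⊆ ·)).image (· \ s), ∏ u ∈ U, p u := by
        rw [Finset.mul_sum, Finset.sum_image hinj]
    _ ≤ _ := by
        refine mul_le_mul_of_nonneg_left (Finset.sum_le_sum_of_subset_of_nonneg ?_
          fun U _ _ => Finset.prod_nonneg fun u _ => hp u) (Finset.prod_nonneg fun u _ => hp u)
        simp only [Finset.image_subset_iff, Finset.mem_filter, mem_minimalVertexCovers, and_imp]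
        exact fun U hU hs => minimal_isVertexCover_sdiff hU hs

theorem sum_prod_minimalVertexCovers_le_one [Fintype V] (G : SimpleGraph V) {p : V → R}
    (hp : ∀ v, 0 ≤ p v) (he : ∀ u v, G.Adj u v → p u + p v ≤ 1) :
    ∑ U ∈ G.minimalVertexCovers, ∏ u ∈ U, p u ≤ 1 := by
  classical
  induction G using WellFoundedLT.induction with
  | _ G ih =>
  rcases eq_or_ne G ⊥ with rfl | hG
  · simp
  obtain ⟨v, w, hvw⟩ : ∃ v w, G.Adj v w := by
    simpa [eq_bot_iff_forall_not_adj] using hG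
  have hsuperset (s : Finset V) (hs : v ∈ s ∨ w ∈ s) :
      ∑ U ∈ G.minimalVertexCovers with s ⊆ U, ∏ u ∈ U, p u ≤ ∏ u ∈ s, p u := by
    refine (sum_prod_minimalVertexCovers_superset_le hp s).trans
      (mul_le_of_le_one_right (Finset.prod_nonneg fun u _ => hp u) (ih _ ?_ ?_))
    · exact hs.elim (deleteIncidenceSets_lt hvw) (deleteIncidenceSets_lt hvw.symm)
    · exact fun a b hab => he a b (deleteIncidenceSets_adj.1 hab).1
  have hN : ∏ u ∈ G.neighborFinset v, p u ≤ p w := by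
    rw [← Finset.mul_prod_erase _ p ((G.mem_neighborFinset v w).2 hvw)]
    refine mul_le_of_le_one_right (hp w) (Finset.prod_le_one (fun u _ => hp u) fun u hu => ?_)
    exact (le_add_of_nonneg_left (hp v)).trans
      (he v u ((G.mem_neighborFinset v u).1 (Finset.mem_of_mem_erase hu)))
  calc ∑ U ∈ G.minimalVertexCovers, ∏ u ∈ U, p u
      = ∑ U ∈ G.minimalVertexCovers with {v} ⊆ U, ∏ u ∈ U, p u +
          ∑ U ∈ G.minimalVertexCovers with v ∉ U, ∏ u ∈ U, p u := by
        simp only [Finset.singleton_subset_iff]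
        exact (Finset.sum_filter_add_sum_filter_not _ _ _).symm
    _ ≤ ∑ U ∈ G.minimalVertexCovers with {v} ⊆ U, ∏ u ∈ U, p u +
          ∑ U ∈ G.minimalVertexCovers with G.neighborFinset v ⊆ U, ∏ u ∈ U, p u := by
        gcongr with U hU
        · exact fun _ _ _ => Finset.prod_nonneg fun u _ => hp u
        · intro hv
          rw [← Finset.coe_subset, coe_neighborFinset]
          exact (mem_minimalVertexCovers.1 hU).prop.neighborSet_subset (by simpa using hv)
    _ ≤ p v + p w := by
        grw [hsuperset _ (.inl (Finset.mem_singleton_self v)),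
          hsuperset _ (.inr ((G.mem_neighborFinset v w).2 hvw)), hN, Finset.prod_singleton]
    _ ≤ 1 := he v w hvw

end SimpleGraph

open scoped Classical in
/-- For a finite graph `G` and nonnegative vertex weights with `p u + p v ≤ 1` on every
edge, the sum over all minimal vertex-covers `U` of `∏_{u ∈ U} p u` is at most 1. -/
theorem sum_over_minimal_vertex_covers_le_one {V : Type*} [Fintype V]
    (G : SimpleGraph V) (p : V → ℝ) (hp : ∀ v, 0 ≤ p v)
    (he : ∀ u v, G.Adj u v → p u + p v ≤ 1) :
    ∑ U ∈ Finset.univ.filter (fun U : Finset V =>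
        (∀ a b, G.Adj a b → a ∈ U ∨ b ∈ U) ∧
        ∀ W ⊆ U, (∀ a b, G.Adj a b → a ∈ W ∨ b ∈ W) → W = U),
      ∏ u ∈ U, p u ≤ 1 := by
  refine le_of_eq_of_le (Finset.sum_congr ?_ fun _ _ => rfl)
    (G.sum_prod_minimalVertexCovers_le_one hp he)
  ext U
  simp only [Finset.mem_filter, Finset.mem_univ, true_and, SimpleGraph.mem_minimalVertexCovers,
    minimal_iff, SimpleGraph.IsVertexCover, Finset.mem_coe]
  grind
end

section
/- Let d ≥ 2, let r ≥ 1 be an integer and let U ⊆ ℤ^d be non-empty with non-empty complement, such that both U and U^c are connected in (ℤ^d)^{⊗r}. Then ∂•∘U := ∂•U ∪ ∂∘U is connected in (ℤ^d)^{⊗r}. -/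
open SimpleGraph

variable {d : ℕ}

def latticeDist (u v : Fin d → ℤ) : ℕ := ∑ i, (u i - v i).natAbs

def IsUnitVec (s : Fin d → ℤ) : Prop := ∑ i, (s i).natAbs = 1

lemma latticeDist_comm (u v : Fin d → ℤ) : latticeDist u v = latticeDist v u :=
  Finset.sum_congr rfl fun i _ => by rw [← Int.natAbs_neg, neg_sub]

@[simp] lemma latticeDist_self (u : Fin d → ℤ) : latticeDist u u = 0 := by
  simp [latticeDist]

lemma latticeDist_triangle (u v w : Fin d → ℤ) :
    latticeDist u w ≤ latticeDist u v + latticeDist v w := by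
  rw [latticeDist, latticeDist, latticeDist, ← Finset.sum_add_distrib]
  refine Finset.sum_le_sum fun i _ => ?_
  simpa using Int.natAbs_add_le (u i - v i) (v i - w i)

lemma latticeDist_add_right (p s : Fin d → ℤ) : latticeDist p (p + s) = ∑ i, (s i).natAbs :=
  Finset.sum_congr rfl fun i _ => by simp

lemma IsUnitVec.neg {s : Fin d → ℤ} (hs : IsUnitVec s) : IsUnitVec (-s) := by
  simpa [IsUnitVec] using hs

lemma IsUnitVec.exists_eq_single {s : Fin d → ℤ} (hs : IsUnitVec s) :
    ∃ i, (s i = 1 ∨ s i = -1) ∧ s = Pi.single i (s i) := by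
  obtain ⟨i, -, hi⟩ := Finset.exists_ne_zero_of_sum_ne_zero (hs.symm ▸ one_ne_zero)
  have hsplit := Finset.add_sum_erase Finset.univ (fun i => (s i).natAbs) (Finset.mem_univ i)
  rw [IsUnitVec] at hs
  have hrest := Finset.sum_eq_zero_iff.mp (by omega : ∑ j ∈ Finset.univ.erase i, (s j).natAbs = 0)
  refine ⟨i, by omega, funext fun j => ?_⟩
  rcases eq_or_ne j i with rfl | hj
  · simp
  · simpa [hj] using hrest j (Finset.mem_erase.mpr ⟨hj, Finset.mem_univ j⟩)

lemma isUnitVec_single {i : Fin d} {ε : ℤ} (hε : ε.natAbs = 1) : IsUnitVec (Pi.single i ε) := by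
  rw [IsUnitVec, Finset.sum_eq_single i (fun j _ hj => by simp [hj]) (by simp)]
  simpa using hε

lemma exists_unitVec_list_sum_eq_sub (u v : Fin d → ℤ) :
    ∃ L : List (Fin d → ℤ),
      (∀ s ∈ L, IsUnitVec s) ∧ L.sum = v - u ∧ L.length = latticeDist u v := by
  refine ⟨(List.finRange d).flatMap fun i =>
    List.replicate (v i - u i).natAbs (Pi.single i (v i - u i).sign), ?_, ?_, ?_⟩
  · simp only [List.mem_flatMap, List.mem_replicate]
    rintro s ⟨i, -, hi, rfl⟩
    exact isUnitVec_single (by simpa [Int.natAbs_sign] using hi)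
  · simp only [List.flatMap, List.sum_flatten, List.map_map, Function.comp_def, List.sum_replicate,
      ← Pi.single_smul, nsmul_eq_mul, Int.natCast_natAbs, ← Fin.sum_univ_def]
    simp_rw [mul_comm |_|, Int.sign_mul_abs, Finset.univ_sum_single]
    rfl
  · rw [latticeDist_comm]
    simp [List.length_flatMap, ← Fin.sum_univ_def, latticeDist]

lemma latticeDist_le_length_of_mem_scanl : ∀ {p q q' : Fin d → ℤ} (L : List (Fin d → ℤ)),
    (∀ s ∈ L, IsUnitVec s) → q ∈ L.scanl (· + ·) p → q' ∈ L.scanl (· + ·) p →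
    latticeDist q q' ≤ L.length
  | _, _, _, [], _, hq, hq' => by
    simp only [List.scanl_nil, List.mem_singleton] at hq hq'
    simp [hq, hq']
  | p, q, q', s :: t, hL, hq, hq' => by
    have ht : ∀ x ∈ t, IsUnitVec x := fun x hx => hL x (List.mem_cons_of_mem _ hx)
    have hhead : p + s ∈ t.scanl (· + ·) (p + s) := by cases t <;> simp
    have hstep : latticeDist p (p + s) = 1 := by
      rw [latticeDist_add_right]; exact hL s List.mem_cons_self
    have hfar : ∀ x ∈ t.scanl (· + ·) (p + s), latticeDist p x ≤ t.length + 1 := fun x hx => by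
      have := latticeDist_le_length_of_mem_scanl t ht hhead hx
      have := latticeDist_triangle p (p + s) x
      omega
    simp only [List.scanl_cons, List.mem_cons, List.length_cons] at hq hq' ⊢
    rcases hq with rfl | hq <;> rcases hq' with rfl | hq'
    · simp
    · exact hfar _ hq'
    · exact latticeDist_comm q q' ▸ hfar _ hq
    · exact (latticeDist_le_length_of_mem_scanl t ht hq hq').trans (Nat.le_succ _)

namespace ZGraph

lemma adj_iff_latticeDist {u v : Fin d → ℤ} : (ZGraph d).Adj u v ↔ latticeDist u v = 1 := Iff.rfl

lemma adj_iff_isUnitVec {u v : Fin d → ℤ} : (ZGraph d).Adj u v ↔ IsUnitVec (v - u) := by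
  rw [adj_iff_latticeDist, ← add_sub_cancel u v, latticeDist_add_right, add_sub_cancel]; rfl

lemma adj_add {p s : Fin d → ℤ} (hs : IsUnitVec s) : (ZGraph d).Adj p (p + s) := by
  rwa [adj_iff_isUnitVec, add_sub_cancel_left]

lemma exists_walk_length_eq : ∀ {p q : Fin d → ℤ} (L : List (Fin d → ℤ)), (∀ s ∈ L, IsUnitVec s) →
    p + L.sum = q → ∃ w : (ZGraph d).Walk p q, w.length = L.length
  | p, _, [], _, rfl => ⟨Walk.nil.copy rfl (by simp), by rw [Walk.length_copy]; rfl⟩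
  | p, _, s :: t, hL, rfl => by
    obtain ⟨w, hw⟩ := exists_walk_length_eq (p := p + s) (q := p + (s :: t).sum) t
      (fun x hx => hL x (List.mem_cons_of_mem _ hx)) (by simp [add_assoc])
    exact ⟨.cons (adj_add (hL s List.mem_cons_self)) w, by rw [Walk.length_cons, hw]; rfl⟩

lemma latticeDist_le_length {u v : Fin d → ℤ} (w : (ZGraph d).Walk u v) :
    latticeDist u v ≤ w.length := by
  induction w with
  | nil => simp
  | @cons a b c h _ ih =>
    have := latticeDist_triangle a b c
    rw [adj_iff_latticeDist.mp h] at this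
    rw [Walk.length_cons]
    omega

lemma exists_walk_length_eq_latticeDist (u v : Fin d → ℤ) :
    ∃ w : (ZGraph d).Walk u v, w.length = latticeDist u v := by
  obtain ⟨L, hL, hsum, hlen⟩ := exists_unitVec_list_sum_eq_sub u v
  exact hlen ▸ exists_walk_length_eq L hL (by rw [hsum, add_sub_cancel])

lemma dist_eq_latticeDist (u v : Fin d → ℤ) : (ZGraph d).dist u v = latticeDist u v := by
  obtain ⟨w, hw⟩ := exists_walk_length_eq_latticeDist u v
  refine le_antisymm (hw ▸ dist_le w) ?_
  obtain ⟨w', hw'⟩ := w.reachable.exists_walk_length_eq_dist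
  exact hw' ▸ latticeDist_le_length w'

end ZGraph

lemma PowGraph.adj_iff {r : ℕ} {u v : Fin d → ℤ} :
    (PowGraph d r).Adj u v ↔ u ≠ v ∧ latticeDist u v ≤ r := by
  rw [← ZGraph.dist_eq_latticeDist]; rfl

lemma PowGraph.adj_of_adj {r : ℕ} (hr : 1 ≤ r) {u v : Fin d → ℤ} (h : (ZGraph d).Adj u v) :
    (PowGraph d r).Adj u v :=
  ⟨h.ne, (dist_eq_one_iff_adj.mpr h).trans_le hr⟩

lemma IsUnitVec.dotProduct_self {a : Fin d → ℤ} (ha : IsUnitVec a) : a ⬝ᵥ a = 1 := by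
  obtain ⟨i, hi, ha⟩ := ha.exists_eq_single
  rw [ha, dotProduct_single, Pi.single_eq_same]
  rcases hi with h | h <;> rw [h] <;> rfl

lemma IsUnitVec.dotProduct_nonneg {x a : Fin d → ℤ} (hx : IsUnitVec x) (ha : IsUnitVec a)
    (hxa : x ≠ -a) : 0 ≤ x ⬝ᵥ a := by
  obtain ⟨i, hai, ha⟩ := ha.exists_eq_single
  obtain ⟨j, hxj, hx⟩ := hx.exists_eq_single
  rw [ha, dotProduct_single]
  rcases eq_or_ne j i with rfl | hji
  · have : x j ≠ -a j := fun e => hxa (by rw [hx, ha, e, Pi.single_neg])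
    rcases hai with h1 | h1 <;> rcases hxj with h2 | h2 <;> simp only [h1, h2] at this ⊢ <;> omega
  · rw [hx, Pi.single_eq_of_ne hji.symm, zero_mul]

lemma neg_mem_of_sum_eq_zero {a : Fin d → ℤ} {t : List (Fin d → ℤ)} (ha : IsUnitVec a)
    (ht : ∀ s ∈ t, IsUnitVec s) (hsum : (a :: t).sum = 0) : -a ∈ t := by
  by_contra hmem
  have key : (a :: t).sum ⬝ᵥ a = 1 + (t.map (· ⬝ᵥ a)).sum := by
    have := map_list_sum (AddMonoidHom.mk' (· ⬝ᵥ a) fun x y => add_dotProduct x y a) t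
    rw [List.sum_cons, add_dotProduct, ha.dotProduct_self]
    exact congrArg (1 + ·) this
  have hnn : 0 ≤ (t.map (· ⬝ᵥ a)).sum := List.sum_nonneg <| by
    simp only [List.mem_map]
    rintro _ ⟨x, hx, rfl⟩
    exact (ht x hx).dotProduct_nonneg ha fun h => hmem (h ▸ hx)
  rw [hsum, zero_dotProduct] at key
  omega

section Cocycle

variable {M : Type*} [AddCommGroup M] (w : (Fin d → ℤ) → (Fin d → ℤ) → M)

def stepSum : (Fin d → ℤ) → List (Fin d → ℤ) → M
  | _, [] => 0
  | p, s :: t => w p (p + s) + stepSum (p + s) t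

lemma stepSum_append : ∀ (p : Fin d → ℤ) (L₁ L₂ : List (Fin d → ℤ)),
    stepSum w p (L₁ ++ L₂) = stepSum w p L₁ + stepSum w (p + L₁.sum) L₂
  | p, [], L₂ => by simp [stepSum]
  | p, s :: t, L₂ => by
    simp only [List.cons_append, stepSum, stepSum_append (p + s) t L₂, List.sum_cons, add_assoc]

def HasPathWeight (p q : Fin d → ℤ) (c : M) : Prop :=
  ∃ L : List (Fin d → ℤ), (∀ s ∈ L, IsUnitVec s) ∧ p + L.sum = q ∧ stepSum w p L = c

variable {w}

lemma HasPathWeight.refl (p : Fin d → ℤ) : HasPathWeight w p p 0 :=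
  ⟨[], by simp, by simp, rfl⟩

lemma HasPathWeight.of_adj {p q : Fin d → ℤ} (h : (ZGraph d).Adj p q) :
    HasPathWeight w p q (w p q) :=
  ⟨[q - p], by simpa [ZGraph.adj_iff_isUnitVec] using h, by simp, by simp [stepSum]⟩

lemma HasPathWeight.trans {p q q' : Fin d → ℤ} {c c' : M} (h : HasPathWeight w p q c)
    (h' : HasPathWeight w q q' c') : HasPathWeight w p q' (c + c') := by
  obtain ⟨L, hL, rfl, rfl⟩ := h
  obtain ⟨L', hL', rfl, rfl⟩ := h'
  exact ⟨L ++ L', by simp_all [or_imp], by simp [add_assoc], stepSum_append w p L L'⟩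

variable
  (hsq : ∀ p a b, IsUnitVec a → IsUnitVec b →
    w p (p + a) + w (p + a) (p + a + b) = w p (p + b) + w (p + b) (p + b + a))
include hsq

lemma stepSum_append_cons : ∀ (p c : Fin d → ℤ) (L₁ L₂ : List (Fin d → ℤ)),
    (∀ s ∈ L₁, IsUnitVec s) → IsUnitVec c →
    stepSum w p (L₁ ++ c :: L₂) = stepSum w p (c :: (L₁ ++ L₂))
  | _, _, [], _, _, _ => rfl
  | p, c, a :: L₁, L₂, hL₁, hc => by
    have ih := stepSum_append_cons (p + a) c L₁ L₂
      (fun s hs => hL₁ s (List.mem_cons_of_mem _ hs)) hc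
    simp only [List.cons_append, stepSum] at ih ⊢
    rw [ih, ← add_assoc, ← add_assoc, hsq p a c (hL₁ a List.mem_cons_self) hc, add_right_comm p a c]

theorem stepSum_eq_zero_of_sum_eq_zero (hneg : ∀ p a, IsUnitVec a → w (p + a) p = -w p (p + a)) :
    ∀ (p : Fin d → ℤ) (L : List (Fin d → ℤ)), (∀ s ∈ L, IsUnitVec s) → L.sum = 0 → stepSum w p L = 0
  | _, [], _, _ => rfl
  | p, a :: t, hL, hsum => by
    have ha := hL a List.mem_cons_self
    have ht : ∀ s ∈ t, IsUnitVec s := fun s hs => hL s (List.mem_cons_of_mem _ hs)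
    -- Some later step is `-a`; commuting it to the front across unit squares, it cancels `a`.
    obtain ⟨t₁, t₂, rfl⟩ := List.append_of_mem (neg_mem_of_sum_eq_zero ha ht hsum)
    have ht₁₂ : ∀ s ∈ t₁ ++ t₂, IsUnitVec s := fun s hs =>
      ht s (List.mem_append.mpr ((List.mem_append.mp hs).imp id (List.mem_cons_of_mem _)))
    have hsum₁₂ : (t₁ ++ t₂).sum = 0 := by
      rw [← hsum]; simp only [List.sum_append, List.sum_cons]; abel
    have ih := stepSum_eq_zero_of_sum_eq_zero hneg p (t₁ ++ t₂) ht₁₂ hsum₁₂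
    rw [stepSum, stepSum_append_cons hsq _ _ _ _ (fun s hs => ht s (by simp [hs])) ha.neg, stepSum,
      add_neg_cancel_right, ← add_assoc, hneg p a ha, add_neg_cancel, zero_add, ih]
termination_by _ L => L.length
decreasing_by simp_all

lemma HasPathWeight.eq_zero_of_self
    (hneg : ∀ p a, IsUnitVec a → w (p + a) p = -w p (p + a))
    {p : Fin d → ℤ} {c : M} (h : HasPathWeight w p p c) : c = 0 := by
  obtain ⟨L, hL, hsum, rfl⟩ := h
  exact stepSum_eq_zero_of_sum_eq_zero hsq hneg p L hL (add_eq_left.mp hsum)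

end Cocycle

set_option synthInstance.maxSize 2000 in
/-- `sᵢ` and `αᵢ` stand for the indicators of `U` and `A` at the vertices of a 4-cycle
`q₀ q₁ q₂ q₃`. Each hypothesis says that two adjacent vertices which both have a neighbour on the
other side of `U` (and so both lie in `∂•∘U`) have the same `α`. -/
lemma four_cycle_crossing_sum : ∀ s₀ s₁ s₂ s₃ α₀ α₁ α₂ α₃ : ZMod 2,
    (s₀ ≠ s₁ ∨ s₀ ≠ s₃ → s₁ ≠ s₀ ∨ s₁ ≠ s₂ → α₀ = α₁) →
    (s₁ ≠ s₀ ∨ s₁ ≠ s₂ → s₂ ≠ s₁ ∨ s₂ ≠ s₃ → α₁ = α₂) →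
    (s₀ ≠ s₁ ∨ s₀ ≠ s₃ → s₃ ≠ s₀ ∨ s₃ ≠ s₂ → α₀ = α₃) →
    (s₃ ≠ s₀ ∨ s₃ ≠ s₂ → s₂ ≠ s₁ ∨ s₂ ≠ s₃ → α₃ = α₂) →
    (s₀ + s₁) * α₀ * α₁ + (s₁ + s₂) * α₁ * α₂ = (s₀ + s₃) * α₀ * α₃ + (s₃ + s₂) * α₃ * α₂ := by
  decide

/-- `∂•∘U`. -/
abbrev bdry (d : ℕ) (U : Set (Fin d → ℤ)) : Set (Fin d → ℤ) := intBdry d U ∪ extBdry d U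

section CrossWeight

variable {U A : Set (Fin d → ℤ)}

noncomputable def crossWeight (U A : Set (Fin d → ℤ)) (u v : Fin d → ℤ) : ZMod 2 :=
  (U.indicator 1 u + U.indicator 1 v) * A.indicator 1 u * A.indicator 1 v

lemma crossWeight_comm (u v : Fin d → ℤ) : crossWeight U A u v = crossWeight U A v u := by
  unfold crossWeight; ring

lemma mem_bdry_of_indicator_ne {u v : Fin d → ℤ} (h : (ZGraph d).Adj u v)
    (hne : U.indicator 1 u ≠ (U.indicator 1 v : ZMod 2)) : u ∈ bdry d U := by
  by_cases hu : u ∈ U <;> by_cases hv : v ∈ U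
  · simp [hu, hv] at hne
  · exact .inl ⟨hu, v, h, hv⟩
  · exact .inr ⟨hu, v, hv, h.symm⟩
  · simp [hu, hv] at hne

lemma indicator_eq_of_iff {u v : Fin d → ℤ} (h : u ∈ A ↔ v ∈ A) :
    A.indicator 1 u = (A.indicator 1 v : ZMod 2) := by
  classical
  simp only [Set.indicator_apply]
  exact if_congr h rfl rfl

lemma crossWeight_eq_of_adj {u v : Fin d → ℤ} {c : ZMod 2} (h : (ZGraph d).Adj u v)
    (hu : u ∈ bdry d U → A.indicator 1 u = c) (hv : v ∈ bdry d U → A.indicator 1 v = c) :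
    crossWeight U A u v = (U.indicator 1 u + U.indicator 1 v) * c := by
  by_cases hne : U.indicator 1 u = (U.indicator 1 v : ZMod 2)
  · simp [crossWeight, hne, CharTwo.add_self_eq_zero]
  · rw [crossWeight, hu (mem_bdry_of_indicator_ne h hne),
      hv (mem_bdry_of_indicator_ne h.symm (Ne.symm hne)), mul_assoc, ← sq, ZMod.pow_card]

lemma stepSum_crossWeight {c : ZMod 2} : ∀ (p : Fin d → ℤ) (L : List (Fin d → ℤ)),
    (∀ s ∈ L, IsUnitVec s) → (∀ q ∈ L.scanl (· + ·) p, q ∈ bdry d U → A.indicator 1 q = c) →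
    stepSum (crossWeight U A) p L = (U.indicator 1 p + U.indicator 1 (p + L.sum)) * c
  | p, [], _, _ => by simp [stepSum, CharTwo.add_self_eq_zero]
  | p, s :: t, hL, hc => by
    have ht : ∀ x ∈ t, IsUnitVec x := fun x hx => hL x (List.mem_cons_of_mem _ hx)
    have hhead : p + s ∈ t.scanl (· + ·) (p + s) := by cases t <;> simp
    rw [stepSum, stepSum_crossWeight (p + s) t ht fun q hq => hc q (by simp [hq]),
      crossWeight_eq_of_adj (ZGraph.adj_add (hL s List.mem_cons_self)) (hc p (by simp))
        (hc (p + s) (by simp [hhead])), List.sum_cons, ← add_assoc]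
    linear_combination CharTwo.add_self_eq_zero (U.indicator 1 (p + s) * c)

variable
  (hA : ∀ u v, (ZGraph d).Adj u v → u ∈ bdry d U → v ∈ bdry d U → (u ∈ A ↔ v ∈ A))
include hA

lemma crossWeight_cycle {q₀ q₁ q₂ q₃ : Fin d → ℤ} (h₀₁ : (ZGraph d).Adj q₀ q₁)
    (h₁₂ : (ZGraph d).Adj q₁ q₂) (h₀₃ : (ZGraph d).Adj q₀ q₃) (h₃₂ : (ZGraph d).Adj q₃ q₂) :
    crossWeight U A q₀ q₁ + crossWeight U A q₁ q₂ =
      crossWeight U A q₀ q₃ + crossWeight U A q₃ q₂ := by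
  have hB {u v w : Fin d → ℤ} (hv : (ZGraph d).Adj u v) (hw : (ZGraph d).Adj u w)
      (h : U.indicator 1 u ≠ (U.indicator 1 v : ZMod 2) ∨
        U.indicator 1 u ≠ (U.indicator 1 w : ZMod 2)) : u ∈ bdry d U :=
    h.elim (mem_bdry_of_indicator_ne hv) (mem_bdry_of_indicator_ne hw)
  have hα {u v : Fin d → ℤ} (h : (ZGraph d).Adj u v) (hu : _) (hv : _) :=
    indicator_eq_of_iff (hA u v h hu hv)
  exact four_cycle_crossing_sum _ _ _ _ _ _ _ _
    (fun h₀ h₁ => hα h₀₁ (hB h₀₁ h₀₃ h₀) (hB h₀₁.symm h₁₂ h₁))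
    (fun h₁ h₂ => hα h₁₂ (hB h₀₁.symm h₁₂ h₁) (hB h₁₂.symm h₃₂.symm h₂))
    (fun h₀ h₃ => hα h₀₃ (hB h₀₁ h₀₃ h₀) (hB h₀₃.symm h₃₂ h₃))
    (fun h₃ h₂ => hα h₃₂ (hB h₀₃.symm h₃₂ h₃) (hB h₁₂.symm h₃₂.symm h₂))

lemma crossWeight_square (p a b : Fin d → ℤ) (ha : IsUnitVec a) (hb : IsUnitVec b) :
    crossWeight U A p (p + a) + crossWeight U A (p + a) (p + a + b) =
      crossWeight U A p (p + b) + crossWeight U A (p + b) (p + b + a) := by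
  rw [add_right_comm p b a]
  exact crossWeight_cycle hA (ZGraph.adj_add ha) (ZGraph.adj_add hb) (ZGraph.adj_add hb)
    (add_right_comm p b a ▸ ZGraph.adj_add ha)

lemma crossWeight_eq_indicator {u v : Fin d → ℤ} (h : (ZGraph d).Adj u v) (hu : u ∈ U)
    (hv : v ∉ U) : crossWeight U A u v = A.indicator 1 u := by
  rw [crossWeight_eq_of_adj (c := A.indicator 1 u) h (fun _ => rfl)
    (fun hvB => indicator_eq_of_iff (hA u v h (.inl ⟨hu, v, h, hv⟩) hvB).symm)]
  simp [hu, hv]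

theorem HasPathWeight.crossWeight_eq_zero {p : Fin d → ℤ} {c : ZMod 2}
    (h : HasPathWeight (crossWeight U A) p p c) : c = 0 :=
  h.eq_zero_of_self (crossWeight_square hA) fun _ _ _ => by
    rw [crossWeight_comm, ZMod.neg_eq_self_mod_two]

end CrossWeight

section Closed

variable {r : ℕ} {U A : Set (Fin d → ℤ)}
  (hA : ∀ u v, u ∈ bdry d U → v ∈ bdry d U → (PowGraph d r).Adj u v → (u ∈ A ↔ v ∈ A))
include hA

lemma hasPathWeight_crossWeight_of_powGraph_adj {a b : Fin d → ℤ} (hab : (PowGraph d r).Adj a b)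
    (hU : a ∈ U ↔ b ∈ U) : HasPathWeight (crossWeight U A) a b 0 := by
  obtain ⟨-, hdist⟩ := PowGraph.adj_iff.mp hab
  obtain ⟨L, hL, hsum, hlen⟩ := exists_unitVec_list_sum_eq_sub a b
  have hend : a + L.sum = b := by rw [hsum, add_sub_cancel]
  obtain ⟨c, hc⟩ : ∃ c : ZMod 2, ∀ q ∈ L.scanl (· + ·) a, q ∈ bdry d U → A.indicator 1 q = c := by
    by_cases h : ∃ q₀ ∈ L.scanl (· + ·) a, q₀ ∈ bdry d U
    · obtain ⟨q₀, hq₀, hB₀⟩ := h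
      refine ⟨A.indicator 1 q₀, fun q hq hB => indicator_eq_of_iff ?_⟩
      rcases eq_or_ne q q₀ with rfl | hne
      · rfl
      · exact hA q q₀ hB hB₀ (PowGraph.adj_iff.mpr
          ⟨hne, (latticeDist_le_length_of_mem_scanl L hL hq hq₀).trans (hlen ▸ hdist)⟩)
    · exact ⟨0, fun q hq hB => absurd ⟨q, hq, hB⟩ h⟩
  refine ⟨L, hL, hend, ?_⟩
  rw [stepSum_crossWeight a L hL hc, hend, indicator_eq_of_iff hU, CharTwo.add_self_eq_zero,
    zero_mul]

lemma hasPathWeight_crossWeight_of_reachable {S : Set (Fin d → ℤ)}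
    (hS : ∀ a ∈ S, ∀ b ∈ S, (a ∈ U ↔ b ∈ U)) {x y : S}
    (h : ((PowGraph d r).induce S).Reachable x y) : HasPathWeight (crossWeight U A) x y 0 := by
  obtain ⟨w⟩ := h
  induction w with
  | nil => exact .refl _
  | @cons a b _ hab _ ih =>
    simpa using (hasPathWeight_crossWeight_of_powGraph_adj hA hab (hS a a.2 b b.2)).trans ih

theorem intBdry_subset_of_mem (hr : 1 ≤ r) (hU : ((PowGraph d r).induce U).Preconnected)
    (hUc : ((PowGraph d r).induce Uᶜ).Preconnected) {x : Fin d → ℤ} (hx : x ∈ intBdry d U)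
    (hxA : x ∈ A) : intBdry d U ⊆ A := by
  rintro y ⟨hyU, y', hyy', hy'⟩
  obtain ⟨hxU, x', hxx', hx'⟩ := hx
  have hA₁ u v (h : (ZGraph d).Adj u v) hu hv : u ∈ A ↔ v ∈ A :=
    hA u v hu hv (PowGraph.adj_of_adj hr h)
  have hloop := (((hasPathWeight_crossWeight_of_reachable hA (fun _ ha _ hb => iff_of_true ha hb)
    (hU ⟨x, hxU⟩ ⟨y, hyU⟩)).trans (.of_adj hyy')).trans
    (hasPathWeight_crossWeight_of_reachable hA (fun _ ha _ hb => iff_of_false ha hb)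
      (hUc ⟨y', hy'⟩ ⟨x', hx'⟩))).trans (.of_adj hxx'.symm)
  have h0 := hloop.crossWeight_eq_zero hA₁
  rw [crossWeight_eq_indicator hA₁ hyy' hyU hy', crossWeight_comm,
    crossWeight_eq_indicator hA₁ hxx' hxU hx', Set.indicator_of_mem hxA] at h0
  by_contra hyA
  simp [Set.indicator_of_notMem hyA] at h0

end Closed

lemma intBdry_nonempty {U : Set (Fin d → ℤ)} (hU : U.Nonempty) (hUc : Uᶜ.Nonempty) :
    (intBdry d U).Nonempty := by
  obtain ⟨u, hu⟩ := hU
  obtain ⟨v, hv⟩ := hUc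
  obtain ⟨w, -⟩ := ZGraph.exists_walk_length_eq_latticeDist u v
  obtain ⟨e, -, he, he'⟩ := w.exists_boundary_dart U hu hv
  exact ⟨e.fst, he, e.snd, e.adj, he'⟩

theorem boundary_connected_in_power_graph_general (d r : ℕ) (hr : 1 ≤ r)
    (U : Set (Fin d → ℤ)) (hU : ((PowGraph d r).induce U).Connected)
    (hUc : ((PowGraph d r).induce Uᶜ).Connected) :
    ((PowGraph d r).induce (intBdry d U ∪ extBdry d U)).Connected := by
  set G := (PowGraph d r).induce (intBdry d U ∪ extBdry d U)
  obtain ⟨x, hx⟩ := intBdry_nonempty (Set.nonempty_coe_sort.mp hU.nonempty)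
    (Set.nonempty_coe_sort.mp hUc.nonempty)
  let A := {v | ∃ hv, G.Reachable ⟨x, .inl hx⟩ ⟨v, hv⟩}
  have hA u v hu hv (h : (PowGraph d r).Adj u v) : u ∈ A ↔ v ∈ A :=
    ⟨fun ⟨_, hxu⟩ => ⟨hv, hxu.trans (Adj.reachable (G := G) h)⟩,
      fun ⟨_, hxv⟩ => ⟨hu, hxv.trans (Adj.reachable (G := G) h.symm)⟩⟩
  have hint : intBdry d U ⊆ A :=
    intBdry_subset_of_mem hA hr hU.preconnected hUc.preconnected hx ⟨.inl hx, .rfl⟩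
  refine (connected_iff_exists_forall_reachable G).mpr ⟨⟨x, .inl hx⟩, fun ⟨y, hy⟩ => ?_⟩
  rcases hy with hy | ⟨hyU, u, hu, huy⟩
  · exact (hint hy).2
  · obtain ⟨_, hxu⟩ := hint ⟨hu, y, huy, hyU⟩
    exact hxu.trans (Adj.reachable (G := G) (PowGraph.adj_of_adj hr huy))

/-- If `U ⊆ ℤ^d` and its complement are both connected in `(ℤ^d)^{⊗r}`, then
`∂•∘U = ∂•U ∪ ∂∘U` is connected in `(ℤ^d)^{⊗r}`. -/
theorem boundary_connected_in_power_graph (d r : ℕ) (hd : 2 ≤ d) (hr : 1 ≤ r)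
    (U : Set (Fin d → ℤ)) (hU : ((PowGraph d r).induce U).Connected)
    (hUc : ((PowGraph d r).induce Uᶜ).Connected) :
    ((PowGraph d r).induce (intBdry d U ∪ extBdry d U)).Connected :=
  boundary_connected_in_power_graph_general d r hr U hU hUc
end
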